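/- arXiv:1808.06199 — 3 statements merged into one kernel-verified Lean document; each statement's English description precedes it below -/
import Mathlib

section
/- Let A be a real symmetric n×n matrix and let X_A = {x ∈ ℝⁿ : x xᵀ − A is positive semidefinite}. Then X_A is nonempty if and only if the second-largest eigenvalue of A satisfies λ₂(A) ≤ 0. -/
/-!
If `x xᵀ - A ⪰ 0` while `λ₁ ≥ λ₂ > 0`, the quadratic form of `A` is positive definite on the
plane spanned by the two top eigenvectors; a vector of that plane orthogonal to `x` then violates
`(x ⬝ᵥ z)² ≥ zᵀ A z`. Conversely, if `λ₂ ≤ 0`, take `x = s u₁` with `s² ≥ λ₁`: the eigenbasis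
of `A` diagonalizes `x xᵀ - A` with eigenvalues `s² - λ₁ ≥ 0` and `-λᵢ ≥ 0` for `i ≥ 2`.
-/

open Matrix

section
variable {ι R : Type*} [Fintype ι]

theorem eq_transpose_mul_diagonal_mul_of_orthonormal_eigenvectors [DecidableEq ι] [CommRing R]
    {B : Matrix ι ι R} {u : ι → ι → R} {μ : ι → R}
    (horth : ∀ i j, u i ⬝ᵥ u j = if i = j then 1 else 0) (heig : ∀ i, B *ᵥ u i = μ i • u i) :
    B = (of u)ᵀ * diagonal μ * of u := by
  have hUUt : of u * (of u)ᵀ = 1 := by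
    ext i j
    simpa [mul_apply, one_apply, dotProduct] using horth i j
  have hBUt : B * (of u)ᵀ = (of u)ᵀ * diagonal μ := by
    ext k i
    rw [mul_diagonal]
    simpa [mul_apply, mulVec, dotProduct, mul_comm] using congrFun (heig i) k
  calc B = B * ((of u)ᵀ * of u) := by rw [mul_eq_one_comm.mp hUUt, Matrix.mul_one]
    _ = (of u)ᵀ * diagonal μ * of u := by rw [← Matrix.mul_assoc, hBUt]

theorem posSemidef_of_orthonormal_eigenvectors [DecidableEq ι] {B : Matrix ι ι ℝ}
    {u : ι → ι → ℝ} {μ : ι → ℝ}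
    (horth : ∀ i j, u i ⬝ᵥ u j = if i = j then 1 else 0) (heig : ∀ i, B *ᵥ u i = μ i • u i)
    (hμ : 0 ≤ μ) : B.PosSemidef := by
  rw [eq_transpose_mul_diagonal_mul_of_orthonormal_eigenvectors horth heig]
  simpa using (PosSemidef.diagonal hμ).conjTranspose_mul_mul_same (of u)

theorem vecMulVec_self_sub_mulVec [CommRing R] (x v : ι → R) (A : Matrix ι ι R) :
    (vecMulVec x x - A) *ᵥ v = (x ⬝ᵥ v) • x - A *ᵥ v := by
  rw [sub_mulVec, vecMulVec_mulVec, op_smul_eq_smul]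

theorem dotProduct_vecMulVec_self_sub_mulVec [CommRing R] [StarRing R] [TrivialStar R]
    (x z : ι → R) (A : Matrix ι ι R) :
    star z ⬝ᵥ (vecMulVec x x - A) *ᵥ z = (x ⬝ᵥ z) ^ 2 - z ⬝ᵥ A *ᵥ z := by
  rw [star_trivial, vecMulVec_self_sub_mulVec, dotProduct_sub, dotProduct_smul, smul_eq_mul,
    dotProduct_comm z x, sq]

theorem not_posSemidef_vecMulVec_sub_of_orthonormal_eigenvectors {A : Matrix ι ι ℝ}
    {u v : ι → ℝ} {a b : ℝ} (huu : u ⬝ᵥ u = 1) (hvv : v ⬝ᵥ v = 1) (huv : u ⬝ᵥ v = 0)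
    (hu : A *ᵥ u = a • u) (hv : A *ᵥ v = b • v) (ha : 0 < a) (hb : 0 < b) (x : ι → ℝ) :
    ¬ (vecMulVec x x - A).PosSemidef := by
  intro hx
  have hquad (z : ι → ℝ) : z ⬝ᵥ A *ᵥ z ≤ (x ⬝ᵥ z) ^ 2 := by
    have := hx.dotProduct_mulVec_nonneg z
    rw [dotProduct_vecMulVec_self_sub_mulVec] at this
    linarith
  -- `A` is positive definite on `span {u, v}`, and this element of it is orthogonal to `x`.
  have hz := hquad ((x ⬝ᵥ v) • u - (x ⬝ᵥ u) • v)
  simp only [mulVec_sub, mulVec_smul, hu, hv, dotProduct_sub, sub_dotProduct, dotProduct_smul,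
    smul_dotProduct, smul_eq_mul, huu, hvv, huv, dotProduct_comm v u] at hz
  have hu' := hquad u
  rw [hu, dotProduct_smul, huu, smul_eq_mul] at hu'
  nlinarith [mul_nonneg ha.le (sq_nonneg (x ⬝ᵥ v))]

theorem exists_posSemidef_vecMulVec_sub [DecidableEq ι] {A : Matrix ι ι ℝ} {u : ι → ι → ℝ}
    {lam : ι → ℝ} (horth : ∀ i j, u i ⬝ᵥ u j = if i = j then 1 else 0)
    (heig : ∀ i, A *ᵥ u i = lam i • u i) (j : ι) (hlam : ∀ i, i ≠ j → lam i ≤ 0) :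
    ∃ x, (vecMulVec x x - A).PosSemidef := by
  set s := Real.sqrt |lam j|
  have hs : s ^ 2 = |lam j| := Real.sq_sqrt (abs_nonneg _)
  refine ⟨s • u j, posSemidef_of_orthonormal_eigenvectors horth
    (μ := fun i => (if i = j then s ^ 2 else 0) - lam i) (fun i => ?_) (fun i => ?_)⟩
  · rw [vecMulVec_self_sub_mulVec, heig, smul_dotProduct, horth, sub_smul]
    by_cases h : i = j
    · subst h; simp [smul_smul, sq]
    · simp [h, Ne.symm h]
  · by_cases h : i = j
    · subst h; simp [hs, le_abs_self]
    · simpa [h] using hlam i h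
end

theorem XA_nonempty_iff_lambda2_nonpos_general {n : ℕ} (hn : 2 ≤ n)
    (A : Matrix (Fin n) (Fin n) ℝ)
    (lam : Fin n → ℝ) (u : Fin n → (Fin n → ℝ))
    (horth : ∀ i j, u i ⬝ᵥ u j = if i = j then (1 : ℝ) else 0)
    (heig : ∀ i, A.mulVec (u i) = lam i • u i)
    (hsort : ∀ i j : Fin n, i ≤ j → lam j ≤ lam i) :
    (∃ x : Fin n → ℝ, (vecMulVec x x - A).PosSemidef) ↔ lam ⟨1, hn⟩ ≤ 0 := by
  constructor
  · rintro ⟨x, hx⟩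
    by_contra! hpos
    have h01 : (⟨0, by omega⟩ : Fin n) ≤ ⟨1, hn⟩ := Fin.mk_le_mk.mpr zero_le_one
    exact not_posSemidef_vecMulVec_sub_of_orthonormal_eigenvectors (by simp [horth])
      (by simp [horth]) (by simp [horth]) (heig _) (heig _)
      (hpos.trans_le (hsort _ _ h01)) hpos x hx
  · intro hlam1
    refine exists_posSemidef_vecMulVec_sub horth heig ⟨0, by omega⟩ fun i hi => ?_
    have hi1 : (⟨1, hn⟩ : Fin n) ≤ i :=
      Fin.le_iff_val_le_val.mpr (Nat.one_le_iff_ne_zero.mpr fun h => hi (Fin.ext h))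
    exact (hsort _ _ hi1).trans hlam1

/-- For a real symmetric n×n matrix A (n ≥ 2), the set
X_A = {x : x xᵀ − A ⪰ 0} is nonempty iff λ₂(A) ≤ 0, where the eigenvalues
are given in descending order by `lam` with orthonormal eigenvectors `u`. -/
theorem XA_nonempty_iff_lambda2_nonpos {n : ℕ} (hn : 2 ≤ n)
    (A : Matrix (Fin n) (Fin n) ℝ) (hA : A.IsSymm)
    (lam : Fin n → ℝ) (u : Fin n → (Fin n → ℝ))
    (horth : ∀ i j, u i ⬝ᵥ u j = if i = j then (1 : ℝ) else 0)
    (heig : ∀ i, A.mulVec (u i) = lam i • u i)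
    (hsort : ∀ i j : Fin n, i ≤ j → lam j ≤ lam i) :
    (∃ x : Fin n → ℝ, (vecMulVec x x - A).PosSemidef) ↔ lam ⟨1, hn⟩ ≤ 0 :=
  XA_nonempty_iff_lambda2_nonpos_general hn A lam u horth heig hsort
end

section
/- Let A be a real symmetric n×n matrix with λ₁(A) > 0 and λₖ(A) < 0 for all k ≥ 2, having orthonormal eigenvectors u⁽¹⁾,...,u⁽ⁿ⁾ with eigenvalues λ₁(A),...,λₙ(A). Then a vector x ∈ ℝⁿ satisfies x xᵀ − A ⪰ 0 if and only if Σᵢ (xᵀ u⁽ⁱ⁾)² / λᵢ(A) ≥ 1. -/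
/-!
Diagonalise: with `U` the orthogonal matrix whose rows are the `u i` and `c = U x`, the matrix
`x xᵀ - A` is the conjugate `Uᵀ (c cᵀ - diag λ) U`, so it is positive semidefinite iff
`∑ λᵢ zᵢ² ≤ (c ⬝ z)²` for every `z`. That scalar condition is read off the identity
`∑ (λᵢ zᵢ - t cᵢ)² / λᵢ = ∑ λᵢ zᵢ² - 2t (c ⬝ z) + t² ∑ cᵢ² / λᵢ`, in which only the `i = 0`
term can be positive: choosing `t` to kill that term bounds `∑ λᵢ zᵢ²` by `2t (c ⬝ z) - t² S`
with `S = ∑ cᵢ² / λᵢ`, while killing all the other terms at `t = 1` produces a `z` with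
`c ⬝ z = 1` and `∑ λᵢ zᵢ² ≥ 2 - S`.
-/

open Matrix Finset

section Signature

variable {ι : Type*}

theorem ne_zero_of_signature {lam : ι → ℝ} {i₀ : ι} (hpos : 0 < lam i₀)
    (hneg : ∀ i ≠ i₀, lam i < 0) (i : ι) : lam i ≠ 0 := by
  rcases eq_or_ne i i₀ with rfl | hi
  · exact hpos.ne'
  · exact (hneg i hi).ne

variable [Fintype ι]

theorem sum_sub_sq_div_eq {lam : ι → ℝ} (hlam : ∀ i, lam i ≠ 0) (c z : ι → ℝ) (t : ℝ) :
    ∑ i, (lam i * z i - t * c i) ^ 2 / lam i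
      = ∑ i, lam i * z i ^ 2 - 2 * t * (c ⬝ᵥ z) + t ^ 2 * ∑ i, c i ^ 2 / lam i := by
  simp only [dotProduct, mul_sum, ← sum_sub_distrib, ← sum_add_distrib]
  refine sum_congr rfl fun i _ => ?_
  field_simp [hlam i]
  ring

theorem sum_mul_sq_le_sq_dotProduct {lam c : ι → ℝ} {i₀ : ι} (hpos : 0 < lam i₀)
    (hneg : ∀ i ≠ i₀, lam i < 0) (hc : 1 ≤ ∑ i, c i ^ 2 / lam i) (z : ι → ℝ) :
    ∑ i, lam i * z i ^ 2 ≤ (c ⬝ᵥ z) ^ 2 := by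
  have hc₀ : c i₀ ≠ 0 := by
    intro h₀
    have : ∑ i, c i ^ 2 / lam i ≤ 0 := sum_nonpos fun i _ => by
      by_cases hi : i = i₀
      · simp [hi, h₀]
      · exact div_nonpos_of_nonneg_of_nonpos (sq_nonneg _) (hneg i hi).le
    linarith
  set t := lam i₀ * z i₀ / c i₀
  have hsum : ∑ i, (lam i * z i - t * c i) ^ 2 / lam i ≤ 0 := sum_nonpos fun i _ => by
    by_cases hi : i = i₀
    · simp [hi, t, hc₀]
    · exact div_nonpos_of_nonneg_of_nonpos (sq_nonneg _) (hneg i hi).le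
  rw [sum_sub_sq_div_eq (ne_zero_of_signature hpos hneg)] at hsum
  nlinarith [sq_nonneg (c ⬝ᵥ z - t), mul_nonneg (sq_nonneg t) (sub_nonneg.2 hc)]

theorem exists_sq_dotProduct_lt_sum_mul_sq [DecidableEq ι] {lam c : ι → ℝ} {i₀ : ι}
    (hpos : 0 < lam i₀) (hneg : ∀ i ≠ i₀, lam i < 0) (hc : ∑ i, c i ^ 2 / lam i < 1) :
    ∃ z : ι → ℝ, (c ⬝ᵥ z) ^ 2 < ∑ i, lam i * z i ^ 2 := by
  have hlam := ne_zero_of_signature hpos hneg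
  by_cases hc₀ : c i₀ = 0
  · refine ⟨Pi.single i₀ 1, ?_⟩
    simpa [hc₀, Pi.single_apply] using hpos
  set S := ∑ i, c i ^ 2 / lam i
  set z : ι → ℝ := (fun i => c i / lam i) + Pi.single i₀ ((1 - S) / c i₀)
  have hcz : c ⬝ᵥ z = 1 := by
    have hS : c ⬝ᵥ (fun i => c i / lam i) = S :=
      sum_congr rfl fun i _ => by ring
    rw [dotProduct_add, hS, dotProduct_single, mul_div_cancel₀ _ hc₀]
    ring
  have hsum : 0 ≤ ∑ i, (lam i * z i - 1 * c i) ^ 2 / lam i := sum_nonneg fun i _ => by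
    by_cases hi : i = i₀
    · exact div_nonneg (sq_nonneg _) (hi ▸ hpos.le)
    · simp [z, hi, mul_div_cancel₀ _ (hlam i)]
  rw [sum_sub_sq_div_eq hlam, hcz] at hsum
  exact ⟨z, by rw [hcz]; linarith⟩

theorem forall_sum_mul_sq_le_sq_dotProduct_iff [DecidableEq ι] {lam c : ι → ℝ} {i₀ : ι}
    (hpos : 0 < lam i₀) (hneg : ∀ i ≠ i₀, lam i < 0) :
    (∀ z, ∑ i, lam i * z i ^ 2 ≤ (c ⬝ᵥ z) ^ 2) ↔ 1 ≤ ∑ i, c i ^ 2 / lam i := by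
  refine ⟨fun h => ?_, sum_mul_sq_le_sq_dotProduct hpos hneg⟩
  by_contra! hc
  obtain ⟨z, hz⟩ := exists_sq_dotProduct_lt_sum_mul_sq hpos hneg hc
  exact (h z).not_gt hz

end Signature

namespace Matrix

variable {ι : Type*} [Fintype ι] [DecidableEq ι]

theorem posSemidef_vecMulVec_sub_diagonal_iff (c lam : ι → ℝ) :
    (vecMulVec c c - diagonal lam).PosSemidef ↔ ∀ z, ∑ i, lam i * z i ^ 2 ≤ (c ⬝ᵥ z) ^ 2 := by
  have herm : (vecMulVec c c - diagonal lam).IsHermitian :=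
    (posSemidef_vecMulVec_self_star c).isHermitian.sub (isHermitian_diagonal lam)
  rw [posSemidef_iff_dotProduct_mulVec, and_iff_right herm]
  refine forall_congr' fun z => ?_
  have hdiag : z ⬝ᵥ (diagonal lam *ᵥ z) = ∑ i, lam i * z i ^ 2 :=
    sum_congr rfl fun i _ => by simp only [mulVec_diagonal]; ring
  rw [star_trivial, sub_mulVec, dotProduct_sub, vecMulVec_mulVec, hdiag, sub_nonneg]
  simp [dotProduct_comm z c, sq]

theorem eq_transpose_mul_diagonal_mul {R : Type*} [CommRing R] {U A : Matrix ι ι R}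
    {lam : ι → R} (hU : U * Uᵀ = 1) (heig : ∀ i, A *ᵥ U i = lam i • U i) :
    A = Uᵀ * diagonal lam * U := by
  have hAU : A * Uᵀ = Uᵀ * diagonal lam := by
    ext k j
    rw [mul_diagonal]
    simpa [mul_apply, mulVec, dotProduct, mul_comm] using congrFun (heig j) k
  rw [← hAU, Matrix.mul_assoc, mul_eq_one_comm.mp hU, Matrix.mul_one]

theorem vecMulVec_self_eq_transpose_mul_mul {R : Type*} [CommRing R] {U : Matrix ι ι R}
    (hU : Uᵀ * U = 1) (x : ι → R) :
    vecMulVec x x = Uᵀ * vecMulVec (U *ᵥ x) (U *ᵥ x) * U := by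
  rw [mul_vecMulVec, vecMulVec_mul, ← mulVec_transpose, mulVec_mulVec, hU, one_mulVec]

end Matrix

/-- If λ₁(A) > 0 and λᵢ(A) < 0 for i ≥ 2 (eigenvalues `lam` in
descending order, orthonormal eigenbasis `u`), then x xᵀ − A ⪰ 0 iff
Σᵢ (xᵀu⁽ⁱ⁾)²/λᵢ(A) ≥ 1. -/
theorem XA_hyperboloid_characterization {n : ℕ} (hn : 2 ≤ n)
    (A : Matrix (Fin n) (Fin n) ℝ)
    (lam : Fin n → ℝ) (u : Fin n → (Fin n → ℝ))
    (horth : ∀ i j, u i ⬝ᵥ u j = if i = j then (1 : ℝ) else 0)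
    (heig : ∀ i, A.mulVec (u i) = lam i • u i)
    (hl1 : 0 < lam ⟨0, by omega⟩)
    (hneg : ∀ i : Fin n, (⟨1, hn⟩ : Fin n) ≤ i → lam i < 0) :
    ∀ x : Fin n → ℝ,
      (vecMulVec x x - A).PosSemidef ↔ 1 ≤ ∑ i, (x ⬝ᵥ u i) ^ 2 / lam i := by
  intro x
  set U : Matrix (Fin n) (Fin n) ℝ := of u
  have hUUt : U * Uᵀ = 1 := by
    ext i j
    simpa [U, mul_apply, one_apply, dotProduct] using horth i j
  have hUtU : Uᵀ * U = 1 := mul_eq_one_comm.mp hUUt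
  have hconj :
      vecMulVec x x - A = star U * (vecMulVec (U *ᵥ x) (U *ᵥ x) - diagonal lam) * U := by
    rw [vecMulVec_self_eq_transpose_mul_mul hUtU x, eq_transpose_mul_diagonal_mul hUUt heig,
      star_eq_conjTranspose, conjTranspose_eq_transpose_of_trivial, Matrix.mul_sub,
      Matrix.sub_mul]
  have hc : U *ᵥ x = fun i => x ⬝ᵥ u i := funext fun i => dotProduct_comm _ _
  have hneg' : ∀ i ≠ (⟨0, by omega⟩ : Fin n), lam i < 0 := fun i hi =>
    hneg i (Fin.le_def.2 (Nat.one_le_iff_ne_zero.2 fun h => hi (Fin.ext h)))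
  rw [hconj, IsUnit.posSemidef_star_left_conjugate_iff ⟨⟨U, Uᵀ, hUUt, hUtU⟩, rfl⟩,
    posSemidef_vecMulVec_sub_diagonal_iff, hc]
  exact forall_sum_mul_sq_le_sq_dotProduct_iff hl1 hneg'
end

section
/- Let T be a tree on n labeled vertices with distance matrix D(T) and P(T) = ((n−1)/2)J − D(T), assumed positive semidefinite. Let A be a symmetric nonnegative n×n matrix, α ∈ ℝⁿ, and μ ∈ ℝⁿ with μ ≥ 0 componentwise, such that diag(α) + μ μᵀ − A is positive semidefinite. Then trace(D(T)·A) ≥ ((n−1)/2)·Σ_{i,j} A_{ij} − ((n−1)/2)·Σᵢ αᵢ − μᵀ P(T) μ. -/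
/-!
Since `D + P` is the constant matrix `c = (n - 1)/2` and `D` vanishes on the diagonal, `P` has
constant diagonal `c`. Pairing the positive semidefinite matrices `P` and
`diag(α) + μμᵀ - A` under the trace gives
`0 ≤ c Σᵢ αᵢ + μᵀPμ - (c Σᵢⱼ Aᵢⱼ - tr(DA))`, which is the claim.
-/

open Matrix

namespace Matrix

variable {n R : Type*} [Fintype n]

open scoped ComplexOrder MatrixOrder in
theorem PosSemidef.trace_mul_nonneg {𝕜 : Type*} [RCLike 𝕜] {A B : Matrix n n 𝕜}
    (hA : A.PosSemidef) (hB : B.PosSemidef) : 0 ≤ (A * B).trace := by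
  classical
  obtain ⟨C, rfl⟩ := CStarAlgebra.nonneg_iff_eq_star_mul_self.mp hA.nonneg
  rw [star_eq_conjTranspose, mul_assoc, trace_mul_comm]
  exact (hB.mul_mul_conjTranspose_same C).trace_nonneg

theorem trace_mul_diagonal [DecidableEq n] [NonUnitalNonAssocSemiring R] (M : Matrix n n R)
    (d : n → R) : (M * diagonal d).trace = ∑ i, M i i * d i := by
  simp [trace, mul_diagonal]

theorem trace_mul_vecMulVec [NonUnitalCommSemiring R] (M : Matrix n n R) (x : n → R) :
    (M * vecMulVec x x).trace = x ⬝ᵥ M *ᵥ x := by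
  rw [mul_vecMulVec, trace_vecMulVec, dotProduct_comm]

theorem trace_of_const_mul [NonUnitalNonAssocSemiring R] (c : R) (M : Matrix n n R) :
    (of (fun _ _ => c) * M).trace = c * ∑ i, ∑ j, M i j := by
  simp only [trace, diag_apply, mul_apply, of_apply, Finset.mul_sum]
  exact Finset.sum_comm

end Matrix

theorem tree_lower_bound_inequality_general {n : ℕ}
    (T : SimpleGraph (Fin n))
    (D P : Matrix (Fin n) (Fin n) ℝ)
    (hD : ∀ i j, D i j = (T.dist i j : ℝ))
    (hP : ∀ i j, P i j = ((n : ℝ) - 1) / 2 - D i j)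
    (hPsd : P.PosSemidef)
    (A : Matrix (Fin n) (Fin n) ℝ)
    (α μ : Fin n → ℝ)
    (hBMI : (diagonal α + vecMulVec μ μ - A).PosSemidef) :
    (D * A).trace ≥ ((n : ℝ) - 1) / 2 * ∑ i, ∑ j, A i j
      - ((n : ℝ) - 1) / 2 * ∑ i, α i - μ ⬝ᵥ P.mulVec μ := by
  set c : ℝ := ((n : ℝ) - 1) / 2
  have hD_eq : D = of (fun _ _ => c) - P := by
    ext i j
    simp [hP]
  have hP_diag : ∀ i, P i i = c := by simp [hP, hD]
  have key := hPsd.trace_mul_nonneg hBMI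
  rw [mul_sub, mul_add, trace_sub, trace_add, trace_mul_diagonal, trace_mul_vecMulVec] at key
  simp only [hP_diag, ← Finset.mul_sum] at key
  rw [hD_eq, sub_mul, trace_sub, trace_of_const_mul]
  linarith

/-- core lower-bound inequality. For a tree T with distance matrix
D, P = ((n−1)/2)J − D assumed PSD, A symmetric nonnegative, μ ≥ 0 and
diag(α) + μμᵀ − A ⪰ 0, we have
trace(D·A) ≥ ((n−1)/2)·Σ_{ij}A_{ij} − ((n−1)/2)·Σᵢαᵢ − μᵀPμ. -/
theorem tree_lower_bound_inequality {n : ℕ}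
    (T : SimpleGraph (Fin n)) (hT : T.IsTree)
    (D P : Matrix (Fin n) (Fin n) ℝ)
    (hD : ∀ i j, D i j = (T.dist i j : ℝ))
    (hP : ∀ i j, P i j = ((n : ℝ) - 1) / 2 - D i j)
    (hPsd : P.PosSemidef)
    (A : Matrix (Fin n) (Fin n) ℝ) (hA : A.IsSymm) (hApos : ∀ i j, 0 ≤ A i j)
    (α μ : Fin n → ℝ) (hμ : ∀ i, 0 ≤ μ i)
    (hBMI : (diagonal α + vecMulVec μ μ - A).PosSemidef) :
    (D * A).trace ≥ ((n : ℝ) - 1) / 2 * ∑ i, ∑ j, A i j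
      - ((n : ℝ) - 1) / 2 * ∑ i, α i - μ ⬝ᵥ P.mulVec μ :=
  tree_lower_bound_inequality_general T D P hD hP hPsd A α μ hBMI
end
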